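/- For every m ≥ 1, every cycle in the graph Y_m has at least 2·2^{2^{2m+1}} + 2 vertices. -/

import Mathlib

open SimpleGraph

/-- A wiring of `G` into `H`: a map on vertices together with, for each edge
(given by an ordered adjacent pair, compatibly with reversal), a walk in `H`
joining the images of the endpoints. -/
structure Wiring {V : Type*} {W : Type*} (G : SimpleGraph V) (H : SimpleGraph W) where
  toFun : V → W
  walk : ∀ u v : V, G.Adj u v → H.Walk (toFun u) (toFun v)
  walk_symm : ∀ (u v : V) (h : G.Adj u v), walk v u (h.symm) = (walk u v h).reverse

namespace Wiring

variable {V : Type*} {W : Type*} {G : SimpleGraph V} {H : SimpleGraph W}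

/-- A wiring is a coarse `k`-wiring if the vertex map is at most `k`-to-one and
every edge of `H` lies on at most `k` of the chosen walks.  (Since walks are
indexed by *ordered* adjacent pairs, with the walk of `(v,u)` the reverse of the
walk of `(u,v)`, each edge of `G` is counted twice; hence the bound `2 * k`.) -/
def IsCoarse (Wr : Wiring G H) (k : ℕ) : Prop :=
  (∀ w : W, {v : V | Wr.toFun v = w}.ncard ≤ k) ∧
  (∀ e : Sym2 W, e ∈ H.edgeSet →
    {p : V × V | ∃ h : G.Adj p.1 p.2, e ∈ (Wr.walk p.1 p.2 h).edges}.ncard ≤ 2 * k)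

/-- The vertices of the image of a wiring. -/
def imageVerts (Wr : Wiring G H) : Set W :=
  Set.range Wr.toFun ∪ {w : W | ∃ (u v : V) (h : G.Adj u v), w ∈ (Wr.walk u v h).support}

/-- The volume of a wiring: the number of vertices of its image. -/
noncomputable def volume (Wr : Wiring G H) : ℕ := Wr.imageVerts.ncard

/-- The image of a wiring, as a subgraph of the target. -/
def imageSubgraph (Wr : Wiring G H) : H.Subgraph where
  verts := Wr.imageVerts
  Adj w w' := ∃ (u v : V) (h : G.Adj u v), (Wr.walk u v h).toSubgraph.Adj w w'
  adj_sub := by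
    rintro a b ⟨u, v, h, ha⟩
    exact (Wr.walk u v h).toSubgraph.adj_sub ha
  edge_vert := by
    rintro a b ⟨u, v, h, ha⟩
    refine Or.inr ⟨u, v, h, ?_⟩
    have := (Wr.walk u v h).toSubgraph.edge_vert ha
    rwa [SimpleGraph.Walk.verts_toSubgraph] at this
  symm := by
    refine ⟨?_⟩
    rintro a b ⟨u, v, h, ha⟩
    exact ⟨u, v, h, ha.symm⟩

end Wiring

/-- `wir k G H` : the minimal volume of a coarse `k`-wiring of `G` into `H`
(`⊤` if there is none). -/
noncomputable def wir {V : Type*} {W : Type*} (k : ℕ)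
    (G : SimpleGraph V) (H : SimpleGraph W) : ℕ∞ :=
  sInf {N : ℕ∞ | ∃ Wr : Wiring G H, Wr.IsCoarse k ∧ N = (Wr.volume : ℕ∞)}

/-- The `k`-wiring profile of `X` into `H`. -/
noncomputable def wirProfile {V : Type*} {W : Type*}
    (X : SimpleGraph V) (H : SimpleGraph W) (k n : ℕ) : ℕ∞ :=
  sSup {N : ℕ∞ | ∃ Γ : X.Subgraph, Γ.verts.Finite ∧ Γ.verts.ncard ≤ n ∧ N = wir k Γ.coe H}

/-- One-directional adjacency generating the 2-dimensional integer grid. -/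
def gridStep (p q : ℤ × ℤ) : Prop :=
  (p.1 = q.1 ∧ q.2 = p.2 + 1) ∨ (p.2 = q.2 ∧ q.1 = p.1 + 1)

/-- The 2-dimensional integer grid: vertices `ℤ²`, edges between points at distance 1. -/
def grid : SimpleGraph (ℤ × ℤ) where
  Adj p q := p ≠ q ∧ (gridStep p q ∨ gridStep q p)
  symm := ⟨fun p q h => ⟨h.1.symm, h.2.symm⟩⟩
  loopless := ⟨fun p h => h.1 rfl⟩

/-- One-directional adjacency for the column graphs: vertical steps everywhere,
horizontal steps at heights divisible by `t`. -/
def colStep (t : ℕ) (p q : ℕ × ℕ) : Prop :=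
  (p.1 = q.1 ∧ q.2 = p.2 + 1) ∨ (p.2 = q.2 ∧ t ∣ p.2 ∧ q.1 = p.1 + 1)

/-- Vertices of `X_n`. -/
def XVert (f : ℕ → ℕ) (n : ℕ) : Type :=
  {p : ℕ × ℕ // p.1 < f n ∧ p.2 ≤ 2 ^ 2 ^ (2 * n) * f n}

/-- The graph `X_n`. -/
def Xgraph (f : ℕ → ℕ) (n : ℕ) : SimpleGraph (XVert f n) where
  Adj u v := u ≠ v ∧ (colStep (2 ^ 2 ^ (2 * n)) u.val v.val ∨ colStep (2 ^ 2 ^ (2 * n)) v.val u.val)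
  symm := ⟨fun u v h => ⟨h.1.symm, h.2.symm⟩⟩
  loopless := ⟨fun u h => h.1 rfl⟩

/-- Vertices of `Y_n`. -/
def YVert (f : ℕ → ℕ) (n : ℕ) : Type :=
  {p : ℕ × ℕ // p.1 < f n ∧ p.2 ≤ 2 ^ 2 ^ (2 * n + 1) * f n}

/-- The graph `Y_n`. -/
def Ygraph (f : ℕ → ℕ) (n : ℕ) : SimpleGraph (YVert f n) where
  Adj u v := u ≠ v ∧
    (colStep (2 ^ 2 ^ (2 * n + 1)) u.val v.val ∨ colStep (2 ^ 2 ^ (2 * n + 1)) v.val u.val)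
  symm := ⟨fun u v h => ⟨h.1.symm, h.2.symm⟩⟩
  loopless := ⟨fun u h => h.1 rfl⟩

/-- Vertices of `X = ⨆ (n ≥ 1) X_n`: triples `(n, i, j)` with `(i,j)` a vertex of `X_n`. -/
def XTVert (f : ℕ → ℕ) : Type :=
  {p : ℕ × ℕ × ℕ // 1 ≤ p.1 ∧ p.2.1 < f p.1 ∧ p.2.2 ≤ 2 ^ 2 ^ (2 * p.1) * f p.1}

/-- The graph `X`, the disjoint union of the `X_n` for `n ≥ 1`. -/
def Xtotal (f : ℕ → ℕ) : SimpleGraph (XTVert f) where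
  Adj u v := u ≠ v ∧ u.val.1 = v.val.1 ∧
    (colStep (2 ^ 2 ^ (2 * u.val.1)) u.val.2 v.val.2 ∨
     colStep (2 ^ 2 ^ (2 * u.val.1)) v.val.2 u.val.2)
  symm := ⟨fun u v h => ⟨h.1.symm, h.2.1.symm, by rw [← h.2.1]; exact h.2.2.symm⟩⟩
  loopless := ⟨fun u h => h.1 rfl⟩

/-- Vertices of `Y = ⨆ (n ≥ 1) Y_n`. -/
def YTVert (f : ℕ → ℕ) : Type :=
  {p : ℕ × ℕ × ℕ // 1 ≤ p.1 ∧ p.2.1 < f p.1 ∧ p.2.2 ≤ 2 ^ 2 ^ (2 * p.1 + 1) * f p.1}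

/-- The graph `Y`, the disjoint union of the `Y_n` for `n ≥ 1`. -/
def Ytotal (f : ℕ → ℕ) : SimpleGraph (YTVert f) where
  Adj u v := u ≠ v ∧ u.val.1 = v.val.1 ∧
    (colStep (2 ^ 2 ^ (2 * u.val.1 + 1)) u.val.2 v.val.2 ∨
     colStep (2 ^ 2 ^ (2 * u.val.1 + 1)) v.val.2 u.val.2)
  symm := ⟨fun u v h => ⟨h.1.symm, h.2.1.symm, by rw [← h.2.1]; exact h.2.2.symm⟩⟩
  loopless := ⟨fun u h => h.1 rfl⟩

/-!
Every edge of `Y_m` changes exactly one coordinate, by one, so a cycle has at least twice its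
height range plus twice its column range many edges. At a vertex of maximal height both
cycle-neighbours lie weakly below it; off the rungs (heights divisible by `T = 2^(2^(2m+1))`) the
only such neighbour is the vertex directly below, so the maximal height, and likewise the minimal
one, is a multiple of `T`. The same uniqueness of neighbours shows that a cycle lies neither in one
column nor in one row, so its height range is at least `T` and its column range at least `1`.
-/

namespace SimpleGraph.Walk

variable {V : Type*} {G : SimpleGraph V}

lemma abs_sub_le_countP_ne (g : V → ℤ) (hg : ∀ x y, G.Adj x y → |g y - g x| ≤ 1) {u v : V}
    (p : G.Walk u v) : |g v - g u| ≤ p.darts.countP (fun d => g d.snd ≠ g d.fst) := by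
  induction p with
  | nil => simp
  | @cons u w v h q ih =>
    rw [darts_cons, List.countP_cons]
    by_cases hw : g w = g u
    · rw [if_neg (by simpa using hw), add_zero, ← hw]
      exact ih
    · rw [if_pos (by simpa using hw)]
      push_cast
      linarith [hg u w h, abs_sub_le (g v) (g w) (g u)]

lemma two_mul_abs_sub_le_countP_ne (g : V → ℤ) (hg : ∀ x y, G.Adj x y → |g y - g x| ≤ 1)
    {r a b : V} (c : G.Walk r r) (ha : a ∈ c.support) (hb : b ∈ c.support) :
    2 * |g b - g a| ≤ c.darts.countP (fun d => g d.snd ≠ g d.fst) := by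
  classical
  have hb' : b ∈ (c.rotate a ha).support := (mem_support_rotate_iff c a ha).2 hb
  have hsplit : (c.rotate a ha).darts =
      ((c.rotate a ha).takeUntil b hb').darts ++ ((c.rotate a ha).dropUntil b hb').darts := by
    rw [← darts_append, take_spec]
  rw [← (rotate_darts c a ha).perm.countP_eq, hsplit, List.countP_append]
  have hto := abs_sub_le_countP_ne g hg ((c.rotate a ha).takeUntil b hb')
  have hfro := abs_sub_le_countP_ne g hg ((c.rotate a ha).dropUntil b hb')
  rw [abs_sub_comm] at hfro
  push_cast
  linarith

lemma IsCycle.exists_adj_adj_ne {v u : V} {c : G.Walk v v} (hc : c.IsCycle)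
    (hu : u ∈ c.support) :
    ∃ x y, x ≠ y ∧ G.Adj u x ∧ G.Adj u y ∧ x ∈ c.support ∧ y ∈ c.support := by
  classical
  have hc' := hc.rotate hu
  refine ⟨_, _, hc'.snd_ne_penultimate, adj_snd hc'.not_nil, (adj_penultimate hc'.not_nil).symm,
    ?_, ?_⟩ <;> exact (mem_support_rotate_iff c u hu).1 (getVert_mem_support _ _)

end SimpleGraph.Walk

namespace Ygraph

variable {f : ℕ → ℕ} {m : ℕ} {u x y : YVert f m}

lemma adj_cases (h : (Ygraph f m).Adj u x) :
    (u.val.1 = x.val.1 ∧ x.val.2 = u.val.2 + 1) ∨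
    (u.val.1 = x.val.1 ∧ u.val.2 = x.val.2 + 1) ∨
    (u.val.2 = x.val.2 ∧ 2 ^ 2 ^ (2 * m + 1) ∣ u.val.2 ∧ x.val.1 = u.val.1 + 1) ∨
    (u.val.2 = x.val.2 ∧ 2 ^ 2 ^ (2 * m + 1) ∣ u.val.2 ∧ u.val.1 = x.val.1 + 1) := by
  obtain ⟨-, h | h⟩ := h <;> rcases h with ⟨h1, h2⟩ | ⟨h1, h2, h3⟩
  · exact Or.inl ⟨h1, h2⟩
  · exact Or.inr (Or.inr (Or.inl ⟨h1, h2, h3⟩))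
  · exact Or.inr (Or.inl ⟨h1.symm, h2⟩)
  · exact Or.inr (Or.inr (Or.inr ⟨h1.symm, h1 ▸ h2, h3⟩))

lemma fst_eq_of_adj_of_not_dvd (h : (Ygraph f m).Adj u x)
    (hu : ¬ 2 ^ 2 ^ (2 * m + 1) ∣ u.val.2) : x.val.1 = u.val.1 := by
  rcases adj_cases h with ⟨h1, -⟩ | ⟨h1, -⟩ | ⟨-, h2, -⟩ | ⟨-, h2, -⟩
  · exact h1.symm
  · exact h1.symm
  · exact absurd h2 hu
  · exact absurd h2 hu

lemma fst_ne_or_fst_ne_of_snd_le (hx : (Ygraph f m).Adj u x) (hy : (Ygraph f m).Adj u y)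
    (hxy : x ≠ y) (hxu : x.val.2 ≤ u.val.2) (hyu : y.val.2 ≤ u.val.2) :
    x.val.1 ≠ u.val.1 ∨ y.val.1 ≠ u.val.1 := by
  by_contra! h
  refine hxy (Subtype.ext (Prod.ext (h.1.trans h.2.symm) ?_))
  rcases adj_cases hx with hx | hx | hx | hx <;> rcases adj_cases hy with hy | hy | hy | hy <;>
    omega

lemma fst_ne_or_fst_ne_of_le_snd (hx : (Ygraph f m).Adj u x) (hy : (Ygraph f m).Adj u y)
    (hxy : x ≠ y) (hxu : u.val.2 ≤ x.val.2) (hyu : u.val.2 ≤ y.val.2) :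
    x.val.1 ≠ u.val.1 ∨ y.val.1 ≠ u.val.1 := by
  by_contra! h
  refine hxy (Subtype.ext (Prod.ext (h.1.trans h.2.symm) ?_))
  rcases adj_cases hx with hx | hx | hx | hx <;> rcases adj_cases hy with hy | hy | hy | hy <;>
    omega

lemma snd_ne_or_snd_ne_of_fst_le (hx : (Ygraph f m).Adj u x) (hy : (Ygraph f m).Adj u y)
    (hxy : x ≠ y) (hxu : x.val.1 ≤ u.val.1) (hyu : y.val.1 ≤ u.val.1) :
    x.val.2 ≠ u.val.2 ∨ y.val.2 ≠ u.val.2 := by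
  by_contra! h
  refine hxy (Subtype.ext (Prod.ext ?_ (h.1.trans h.2.symm)))
  rcases adj_cases hx with hx | hx | hx | hx <;> rcases adj_cases hy with hy | hy | hy | hy <;>
    omega

lemma dvd_snd_of_snd_le (hx : (Ygraph f m).Adj u x) (hy : (Ygraph f m).Adj u y)
    (hxy : x ≠ y) (hxu : x.val.2 ≤ u.val.2) (hyu : y.val.2 ≤ u.val.2) :
    2 ^ 2 ^ (2 * m + 1) ∣ u.val.2 := by
  by_contra hT
  exact (fst_ne_or_fst_ne_of_snd_le hx hy hxy hxu hyu).elim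
    (· (fst_eq_of_adj_of_not_dvd hx hT)) (· (fst_eq_of_adj_of_not_dvd hy hT))

lemma dvd_snd_of_le_snd (hx : (Ygraph f m).Adj u x) (hy : (Ygraph f m).Adj u y)
    (hxy : x ≠ y) (hxu : u.val.2 ≤ x.val.2) (hyu : u.val.2 ≤ y.val.2) :
    2 ^ 2 ^ (2 * m + 1) ∣ u.val.2 := by
  by_contra hT
  exact (fst_ne_or_fst_ne_of_le_snd hx hy hxy hxu hyu).elim
    (· (fst_eq_of_adj_of_not_dvd hx hT)) (· (fst_eq_of_adj_of_not_dvd hy hT))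

lemma length_eq_countP_add_countP {v w : YVert f m} (p : (Ygraph f m).Walk v w) :
    p.length = p.darts.countP (fun d => (d.snd.val.2 : ℤ) ≠ d.fst.val.2) +
      p.darts.countP (fun d => (d.snd.val.1 : ℤ) ≠ d.fst.val.1) := by
  rw [← p.length_darts,
    List.length_eq_countP_add_countP (fun d => (d.snd.val.2 : ℤ) ≠ d.fst.val.2)]
  congr 1
  refine List.countP_congr fun d _ => ?_
  rcases adj_cases d.adj with h | h | h | h <;> simp <;> omega

lemma two_mul_add_two_mul_le_length {r a b : YVert f m} (c : (Ygraph f m).Walk r r)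
    (ha : a ∈ c.support) (hb : b ∈ c.support) (hx : x ∈ c.support) (hy : y ∈ c.support) :
    2 * |(b.val.2 : ℤ) - a.val.2| + 2 * |(y.val.1 : ℤ) - x.val.1| ≤ c.length := by
  have hheight := c.two_mul_abs_sub_le_countP_ne (fun z => (z.val.2 : ℤ))
    (fun _ _ h => by rcases adj_cases h with h | h | h | h <;> rw [abs_le] <;> omega) ha hb
  have hcolumn := c.two_mul_abs_sub_le_countP_ne (fun z => (z.val.1 : ℤ))
    (fun _ _ h => by rcases adj_cases h with h | h | h | h <;> rw [abs_le] <;> omega) hx hy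
  rw [length_eq_countP_add_countP]
  push_cast
  linarith

end Ygraph

theorem statement8_general
    (f : ℕ → ℕ)
    (m : ℕ)
    (v : YVert f m) (c : (Ygraph f m).Walk v v) (hc : c.IsCycle) :
    2 * 2 ^ 2 ^ (2 * m + 1) + 2 ≤ c.length := by
  have hfin := c.support.finite_toSet
  have hne : {x | x ∈ c.support}.Nonempty := ⟨v, c.start_mem_support⟩
  obtain ⟨b, hb, hbmax⟩ := Set.exists_max_image _ (fun x : YVert f m => x.val.2) hfin hne
  obtain ⟨a, ha, hamin⟩ := Set.exists_min_image _ (fun x : YVert f m => x.val.2) hfin hne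
  obtain ⟨r, hr, hrmax⟩ := Set.exists_max_image _ (fun x : YVert f m => x.val.1) hfin hne
  obtain ⟨xb, yb, hxyb, hxb, hyb, hxb', hyb'⟩ := hc.exists_adj_adj_ne hb
  obtain ⟨xa, ya, hxya, hxa, hya, hxa', hya'⟩ := hc.exists_adj_adj_ne ha
  obtain ⟨xr, yr, hxyr, hxr, hyr, hxr', hyr'⟩ := hc.exists_adj_adj_ne hr
  have hdvd_b := Ygraph.dvd_snd_of_snd_le hxb hyb hxyb (hbmax xb hxb') (hbmax yb hyb')
  have hdvd_a := Ygraph.dvd_snd_of_le_snd hxa hya hxya (hamin xa hxa') (hamin ya hya')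
  obtain ⟨z, hz, hzb⟩ : ∃ z ∈ c.support, z.val.1 ≠ b.val.1 :=
    (Ygraph.fst_ne_or_fst_ne_of_snd_le hxb hyb hxyb (hbmax xb hxb') (hbmax yb hyb')).elim
      (⟨xb, hxb', ·⟩) (⟨yb, hyb', ·⟩)
  obtain ⟨w, hw, hwr⟩ : ∃ w ∈ c.support, w.val.2 ≠ r.val.2 :=
    (Ygraph.snd_ne_or_snd_ne_of_fst_le hxr hyr hxyr (hrmax xr hxr') (hrmax yr hyr')).elim
      (⟨xr, hxr', ·⟩) (⟨yr, hyr', ·⟩)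
  have hab : a.val.2 < b.val.2 := by
    have := hamin w hw; have := hbmax w hw; have := hamin r hr; have := hbmax r hr; omega
  have hT := Nat.le_of_dvd (Nat.sub_pos_of_lt hab) (Nat.dvd_sub hdvd_b hdvd_a)
  have hlen := Ygraph.two_mul_add_two_mul_le_length c ha hb hz hb
  have hcolumn : 1 ≤ |(b.val.1 : ℤ) - z.val.1| := Int.one_le_abs (by omega)
  rw [abs_of_pos (by omega : (0 : ℤ) < b.val.2 - a.val.2)] at hlen
  omega

/-- For `m ≥ 1`, every cycle in `Y_m` has at least
`2 · 2^(2^(2m+1)) + 2` vertices (a cycle of length `L` visits exactly `L` vertices). -/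
theorem statement8
    (f : ℕ → ℕ)
    (hsurj : ∀ k, 1 ≤ k → ∃ n, 1 ≤ n ∧ f n = k)
    (hf1 : f 1 = 1)
    (hf : ∀ n, 2 ≤ n → 2 ≤ f n ∧ f n ≤ n)
    (hinf : ∀ k, 2 ≤ k → {n | f n = k}.Infinite)
    (m : ℕ) (hm : 1 ≤ m)
    (v : YVert f m) (c : (Ygraph f m).Walk v v) (hc : c.IsCycle) :
    2 * 2 ^ 2 ^ (2 * m + 1) + 2 ≤ c.length :=
  statement8_general f m v c hc
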